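/- arXiv:2502.16496 — 2 statements merged into one kernel-verified Lean document; each statement's English description precedes it below -/
import Mathlib

section
/- Multi-agent advantage decomposition: for any permutation i_1,...,i_n of the agents, the joint advantage A^{i_{1:n}}(o, a^{i_{1:n}}) equals the sum over k = 1,...,n of the single-agent advantages A^{i_k}(o, a^{i_{1:k-1}}, a^{i_k}). -/
open Finset

/-- The multi-agent observation-action value `Q^{s}(a)`: the expectation of `Q` over the
actions of the agents outside `s` drawn from their policies, with the agents in `s`
taking the actions prescribed by `a`. (The observation `o` is fixed throughout.) -/
noncomputable def multiAgentQ {n : ℕ} {A : Fin n → Type*} [∀ i, Fintype (A i)]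
    (π : ∀ i, A i → ℝ) (Q : (∀ i, A i) → ℝ) (s : Finset (Fin n)) (a : ∀ i, A i) : ℝ :=
  ∑ b : ∀ i, A i, (∏ i ∈ sᶜ, π i (b i)) * Q (fun i => if i ∈ s then a i else b i)

lemma Fin.Iic_eq_filter_val_lt_succ {n : ℕ} (k : Fin n) :
    Iic k = univ.filter fun j : Fin n => (j : ℕ) < k + 1 := by
  ext j
  simp only [mem_Iic, mem_filter, mem_univ, true_and, Fin.le_def, Nat.lt_succ_iff]

lemma Fin.Iio_eq_filter_val_lt {n : ℕ} (k : Fin n) :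
    Iio k = univ.filter fun j : Fin n => (j : ℕ) < k := by
  ext j
  simp only [mem_Iio, mem_filter, mem_univ, true_and, Fin.lt_def]

theorem sub_eq_sum_image_Iic_sub_image_Iio {M α : Type*} [AddCommGroup M] [Fintype α]
    [DecidableEq α] {n : ℕ} (g : Finset α → M) (e : Fin n ≃ α) :
    g univ - g ∅ = ∑ k : Fin n, (g ((Iic k).image e) - g ((Iio k).image e)) := by
  set h : ℕ → M := fun m => g ((univ.filter fun j : Fin n => (j : ℕ) < m).image e)
  calc g univ - g ∅ = h n - h 0 := by simp [h, image_univ_equiv]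
    _ = ∑ m ∈ range n, (h (m + 1) - h m) := (sum_range_sub h n).symm
    _ = ∑ k : Fin n, (h (k + 1) - h k) := (Fin.sum_univ_eq_sum_range _ n).symm
    _ = _ := by simp only [h, Fin.Iic_eq_filter_val_lt_succ, Fin.Iio_eq_filter_val_lt]

theorem multiAgent_advantage_decomposition_general {n : ℕ} {A : Fin n → Type*} [∀ i, Fintype (A i)]
    (π : ∀ i, A i → ℝ)
    (Q : (∀ i, A i) → ℝ) (σ : Equiv.Perm (Fin n)) (a : ∀ i, A i) :
    multiAgentQ π Q Finset.univ a - multiAgentQ π Q ∅ a =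
      ∑ k : Fin n,
        (multiAgentQ π Q ((Finset.Iic k).image σ) a -
          multiAgentQ π Q ((Finset.Iio k).image σ) a) :=
  sub_eq_sum_image_Iic_sub_image_Iio (fun s => multiAgentQ π Q s a) σ

/-- Multi-agent advantage decomposition: for any permutation `σ` of the agents, the joint
advantage `Q^{i_{1:n}} - V` equals the sum over `k` of the single-agent advantages
`Q^{i_{1:k}} - Q^{i_{1:k-1}}`. -/
theorem multiAgent_advantage_decomposition {n : ℕ} {A : Fin n → Type*} [∀ i, Fintype (A i)]
    (π : ∀ i, A i → ℝ) (hπ0 : ∀ i x, 0 ≤ π i x) (hπ1 : ∀ i, ∑ x : A i, π i x = 1)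
    (Q : (∀ i, A i) → ℝ) (σ : Equiv.Perm (Fin n)) (a : ∀ i, A i) :
    multiAgentQ π Q Finset.univ a - multiAgentQ π Q ∅ a =
      ∑ k : Fin n,
        (multiAgentQ π Q ((Finset.Iic k).image σ) a -
          multiAgentQ π Q ((Finset.Iio k).image σ) a) :=
  multiAgent_advantage_decomposition_general π Q σ a
end

section
/- The Plackett-Luce probability of the identity permutation on scores sorted in decreasing order is maximal among all permutations: if v_1 ≥ v_2 ≥ ... ≥ v_n > 0, then P(id | v) ≥ P(σ | v) for every permutation σ. -/
/-!
The numerator of `plackettLuce v σ` is `∏ i, v i` whatever `σ` is, so only the denominators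
matter. The `i`-th denominator sums `v` over the `n - i` items that `σ` ranks from position `i`
on; for decreasing scores no set of `n - i` items has a smaller sum than the last `n - i`, which
is what the identity uses. Hence every denominator is smallest at the identity.
-/

/-- The Plackett-Luce probability of a permutation `σ` of `n` items with scores `v`. -/
noncomputable def plackettLuce {n : ℕ} (v : Fin n → ℝ) (σ : Equiv.Perm (Fin n)) : ℝ :=
  ∏ i : Fin n, v (σ i) / ∑ j ∈ Finset.Ici i, v (σ j)

open Finset

theorem Finset.sum_Ici_le_sum_of_card_eq {α M : Type*} [LinearOrder α] [LocallyFiniteOrderTop α]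
    [AddCommMonoid M] [PartialOrder M] [IsOrderedAddMonoid M] {f : α → M} (hf : Antitone f)
    (i : α) {s : Finset α} (hcard : #s = #(Ici i)) :
    ∑ j ∈ Ici i, f j ≤ ∑ j ∈ s, f j := by
  have outside_le : ∑ j ∈ Ici i \ s, f j ≤ ∑ j ∈ s \ Ici i, f j :=
    calc ∑ j ∈ Ici i \ s, f j
        ≤ #(Ici i \ s) • f i :=
          sum_le_card_nsmul _ _ _ fun j hj ↦ hf (mem_Ici.mp (mem_sdiff.mp hj).1)
      _ = #(s \ Ici i) • f i := by rw [card_sdiff_comm hcard.symm]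
      _ ≤ ∑ j ∈ s \ Ici i, f j :=
          card_nsmul_le_sum _ _ _ fun j hj ↦
            hf (not_le.mp (mem_Ici.not.mp (mem_sdiff.mp hj).2)).le
  calc ∑ j ∈ Ici i, f j
      = ∑ j ∈ Ici i ∩ s, f j + ∑ j ∈ Ici i \ s, f j := (sum_inter_add_sum_sdiff _ _ _).symm
    _ ≤ ∑ j ∈ s ∩ Ici i, f j + ∑ j ∈ s \ Ici i, f j := by
        rw [inter_comm]; gcongr
    _ = ∑ j ∈ s, f j := sum_inter_add_sum_sdiff _ _ _

theorem Finset.sum_Ici_le_sum_Ici_perm {α M : Type*} [LinearOrder α] [LocallyFiniteOrderTop α]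
    [AddCommMonoid M] [PartialOrder M] [IsOrderedAddMonoid M] {f : α → M} (hf : Antitone f)
    (σ : Equiv.Perm α) (i : α) :
    ∑ j ∈ Ici i, f j ≤ ∑ j ∈ Ici i, f (σ j) := by
  rw [← sum_image fun x _ y _ h ↦ σ.injective h]
  exact sum_Ici_le_sum_of_card_eq hf i (card_image_of_injective _ σ.injective)

theorem plackettLuce_eq_prod_div_prod {n : ℕ} (v : Fin n → ℝ) (σ : Equiv.Perm (Fin n)) :
    plackettLuce v σ = (∏ i, v i) / ∏ i, ∑ j ∈ Ici i, v (σ j) := by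
  rw [plackettLuce, prod_div_distrib, Equiv.prod_comp σ v]

/-- If the scores are sorted in decreasing order, the identity permutation is a mode of the
Plackett-Luce distribution: its probability is at least that of every other permutation. -/
theorem plackettLuce_sorted_identity_is_mode {n : ℕ} (v : Fin n → ℝ) (hv : ∀ i, 0 < v i)
    (hsorted : ∀ i j : Fin n, i ≤ j → v j ≤ v i) (σ : Equiv.Perm (Fin n)) :
    plackettLuce v σ ≤ plackettLuce v (Equiv.refl (Fin n)) := by
  have hv_antitone : Antitone v := hsorted
  have hpos : ∀ i, 0 < ∑ j ∈ Ici i, v j := fun i ↦ sum_pos (fun j _ ↦ hv j) nonempty_Ici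
  rw [plackettLuce_eq_prod_div_prod, plackettLuce_eq_prod_div_prod]
  exact div_le_div_of_nonneg_left (prod_nonneg fun i _ ↦ (hv i).le)
    (prod_pos fun i _ ↦ hpos i)
    (prod_le_prod (fun i _ ↦ (hpos i).le) fun i _ ↦ sum_Ici_le_sum_Ici_perm hv_antitone σ i)
end
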